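/- Let G be a finite simple graph that admits a decomposition into triangles and 5-cycles. Then the 5-blowup B_5(G) admits a 5-cycle decomposition. -/

import Mathlib

/-!
Fix a decomposition of `G` into triangles and 5-cycles. The edges of `B₅(G)` lying over
distinct pieces are disjoint, so it suffices to decompose the edges lying over a single piece,
i.e. `B₅(K₃)` and `B₅(C₅)`, into 5-cycles. Read the layers in `ℤ/5`.

For a 5-cycle `v₀ … v₄` take the 25 cycles `m ↦ (v_m, x + m y)`: an edge over `v_m v_{m+1}`
from layer `i` to layer `j` forces `y = j - i` and `x = i - m y`.

For a triangle `abc`, the three rotations of `(a,0) (b,1) (c,3) (a,1) (b,0)` realise, over each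
edge of the triangle, every layer difference exactly once, so their 15 translates do it.
-/

open SimpleGraph

/-- `G` decomposes into cycles whose lengths lie in `L`. -/
def HasCycleDecomp {V : Type*} (G : SimpleGraph V) (L : Set ℕ) : Prop :=
  ∃ D : Set (Set (Sym2 V)),
    (∀ E ∈ D, ∃ (v : V) (w : G.Walk v v),
      w.IsCycle ∧ w.length ∈ L ∧ E = {e | e ∈ w.edges}) ∧
    ⋃₀ D = G.edgeSet ∧ D.PairwiseDisjoint id

/-- The `k`-blowup of `G`: vertices are pairs `(u, i)` with `i ∈ Fin k`, and
`(u, i)` is adjacent to `(v, j)` iff `u` is adjacent to `v` in `G`. -/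
def blowup {V : Type*} (G : SimpleGraph V) (k : ℕ) : SimpleGraph (V × Fin k) :=
  G.comap Prod.fst

theorem Sym2.exists_eq_mk_of_map_fst_eq {α β : Type*} {f : Sym2 (α × β)} {a b : α}
    (h : Sym2.map Prod.fst f = s(a, b)) : ∃ i j : β, f = s((a, i), (b, j)) := by
  induction f using Sym2.ind with
  | _ p q =>
    obtain ⟨a', i⟩ := p
    obtain ⟨b', j⟩ := q
    rcases Sym2.eq_iff.1 h with ⟨rfl, rfl⟩ | ⟨rfl, rfl⟩
    · exact ⟨i, j, rfl⟩
    · exact ⟨j, i, Sym2.eq_swap⟩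

open Function

namespace SimpleGraph

section Decomposition

variable {W : Type*} {H : SimpleGraph W} {L : Set ℕ}

variable (H L) in
def IsCycleEdgeSet (S : Set (Sym2 W)) : Prop :=
  ∃ (v : W) (w : H.Walk v v), w.IsCycle ∧ w.length ∈ L ∧ S = {e | e ∈ w.edges}

variable (H L) in
def CycleDecomposable (S : Set (Sym2 W)) : Prop :=
  ∃ D : Set (Set (Sym2 W)),
    (∀ E ∈ D, H.IsCycleEdgeSet L E) ∧ ⋃₀ D = S ∧ D.PairwiseDisjoint id

theorem hasCycleDecomp_iff : HasCycleDecomp H L ↔ H.CycleDecomposable L H.edgeSet :=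
  Iff.rfl

theorem IsCycleEdgeSet.cycleDecomposable {S : Set (Sym2 W)} (h : H.IsCycleEdgeSet L S) :
    H.CycleDecomposable L S :=
  ⟨{S}, by simpa using h, Set.sUnion_singleton S, Set.pairwiseDisjoint_singleton _ _⟩

theorem CycleDecomposable.biUnion {ι : Type*} {s : Set ι} {S : ι → Set (Sym2 W)}
    (hs : s.PairwiseDisjoint S) (h : ∀ i ∈ s, H.CycleDecomposable L (S i)) :
    H.CycleDecomposable L (⋃ i ∈ s, S i) := by
  choose D hD hunion hdisj using h
  refine ⟨⋃ i, ⋃ hi : i ∈ s, D i hi, ?_, ?_, ?_⟩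
  · simp only [Set.mem_iUnion]
    rintro E ⟨i, hi, hE⟩
    exact hD i hi E hE
  · ext f
    simp only [Set.mem_sUnion, Set.mem_iUnion]
    constructor
    · rintro ⟨E, ⟨i, hi, hE⟩, hf⟩
      exact ⟨i, hi, hunion i hi ▸ ⟨E, hE, hf⟩⟩
    · rintro ⟨i, hi, hf⟩
      obtain ⟨E, hE, hfE⟩ := (hunion i hi).symm ▸ hf
      exact ⟨E, ⟨i, hi, hE⟩, hfE⟩
  · rintro E hE E' hE' hne
    simp only [Set.mem_iUnion] at hE hE'
    obtain ⟨i, hi, hE⟩ := hE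
    obtain ⟨j, hj, hE'⟩ := hE'
    by_cases hij : i = j
    · subst hij
      exact hdisj i hi hE hE' hne
    · exact (hs hi hj hij).mono (hunion i hi ▸ Set.subset_sUnion_of_mem hE)
        (hunion j hj ▸ Set.subset_sUnion_of_mem hE')

theorem CycleDecomposable.iUnion {ι : Type*} {S : ι → Set (Sym2 W)}
    (hS : Pairwise (Disjoint on S)) (h : ∀ i, H.CycleDecomposable L (S i)) :
    H.CycleDecomposable L (⋃ i, S i) := by
  simpa using CycleDecomposable.biUnion (hS.set_pairwise Set.univ) fun i _ => h i

theorem isCycleEdgeSet_range_of_injective {c : Fin 5 → W} (hc : Injective c)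
    (hadj : ∀ m, H.Adj (c m) (c (m + 1))) :
    H.IsCycleEdgeSet {5} (Set.range fun m => s(c m, c (m + 1))) := by
  refine ⟨c 0, .cons (hadj 0) (.cons (hadj 1) (.cons (hadj 2) (.cons (hadj 3)
    (.cons (hadj 4) .nil)))), by simp [Walk.isCycle_def, hc.eq_iff], by simp, ?_⟩
  ext e
  simp [Fin.exists_fin_succ, eq_comm]

theorem cycleDecomposable_iUnion_range_of_injective {ι : Type*} {c : ι → Fin 5 → W}
    (hc : ∀ p, Injective (c p)) (hadj : ∀ p m, H.Adj (c p m) (c p (m + 1)))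
    (hunique : ∀ p q m m', s(c p m, c p (m + 1)) = s(c q m', c q (m' + 1)) → p = q) :
    H.CycleDecomposable {5} (⋃ p, Set.range fun m => s(c p m, c p (m + 1))) := by
  refine CycleDecomposable.iUnion (fun p q hpq => Set.disjoint_left.2 ?_) fun p =>
    (isCycleEdgeSet_range_of_injective (hc p) (hadj p)).cycleDecomposable
  rintro _ ⟨m, rfl⟩ ⟨m', h⟩
  exact hpq (hunique p q m m' h.symm)

end Decomposition

theorem Walk.IsCycle.exists_enumeration {V : Type*} {G : SimpleGraph V} {u : V}
    {w : G.Walk u u} (hw : w.IsCycle) {n : ℕ} [NeZero n] (hn : w.length = n) :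
    ∃ c : Fin n → V, Injective c ∧ (∀ m, G.Adj (c m) (c (m + 1))) ∧
      {e | e ∈ w.edges} = Set.range fun m => s(c m, c (m + 1)) := by
  have h3 := hw.three_le_length
  have getVert_succ (m : Fin n) : w.getVert ↑(m + 1) = w.getVert (m + 1) := by
    rw [Fin.val_add, Fin.val_one', Nat.mod_eq_of_lt (a := 1) (by omega)]
    rcases Nat.lt_or_ge (m.val + 1) n with h | h
    · rw [Nat.mod_eq_of_lt h]
    · rw [show m.val + 1 = n by omega, Nat.mod_self, Walk.getVert_zero,
        Walk.getVert_of_length_le _ (by omega)]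
  refine ⟨fun m => w.getVert m, fun a b hab => Fin.ext ?_, fun m => ?_, ?_⟩
  · exact hw.getVert_injOn' (by simp; omega) (by simp; omega) hab
  · simpa only [getVert_succ] using w.adj_getVert_succ (by omega)
  · ext e
    induction e using Sym2.ind with
    | _ a b =>
      simp only [Set.mem_ofPred_eq, Walk.mk_mem_edges_iff_exists, Set.mem_range, getVert_succ]
      constructor
      · rintro ⟨i, hi, h⟩
        exact ⟨⟨i, hn ▸ hi⟩, h⟩
      · rintro ⟨m, h⟩
        exact ⟨m, hn ▸ m.2, h⟩

section Blowup

variable {V : Type*} {G : SimpleGraph V}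

theorem blowup_edgeSet (k : ℕ) :
    (blowup G k).edgeSet = Sym2.map Prod.fst ⁻¹' G.edgeSet := by
  ext f
  induction f using Sym2.ind with
  | _ p q => simp [blowup]

theorem adj_of_ne_of_adj_succ {u : Fin 3 → V} (hadj : ∀ r, G.Adj (u r) (u (r + 1)))
    {r r' : Fin 3} (hne : r ≠ r') : G.Adj (u r) (u r') := by
  have h₀ := hadj 0; have h₁ := hadj 1; have h₂ := hadj 2
  fin_cases r <;> fin_cases r' <;>
    first | exact absurd rfl hne | assumption | exact h₀.symm | exact h₁.symm | exact h₂.symm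

def triangleCycle (u : Fin 3 → V) (r : Fin 3) (i : Fin 5) : Fin 5 → V × Fin 5 :=
  ![(u r, i), (u (r + 1), i + 1), (u (r + 2), i + 3), (u r, i + 1), (u (r + 1), i)]

theorem triangleCycle_unique {u : Fin 3 → V} (hu : Injective u) {r r' : Fin 3}
    {i i' m m' : Fin 5}
    (h : s(triangleCycle u r i m, triangleCycle u r i (m + 1)) =
      s(triangleCycle u r' i' m', triangleCycle u r' i' (m' + 1))) :
    r = r' ∧ i = i' := by
  fin_cases m <;> fin_cases m' <;> simp [triangleCycle, hu.eq_iff] at h <;> omega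

theorem cycleDecomposable_blowup_triangle {u : Fin 3 → V}
    (hadj : ∀ r, G.Adj (u r) (u (r + 1))) :
    (blowup G 5).CycleDecomposable {5}
      (Sym2.map Prod.fst ⁻¹' Set.range fun r => s(u r, u (r + 1))) := by
  have hu : Injective u := fun r r' h => by_contra fun hne => (adj_of_ne_of_adj_succ hadj hne).ne h
  have hedge (a b : Fin 3) (hab : a ≠ b) : ∃ r, s(u r, u (r + 1)) = s(u a, u b) := by
    rcases (by omega : b = a + 1 ∨ a = b + 1) with rfl | rfl
    · exact ⟨a, rfl⟩
    · exact ⟨b, Sym2.eq_swap⟩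
  have hcover : ⋃ p : Fin 3 × Fin 5, Set.range (fun m =>
      s(triangleCycle u p.1 p.2 m, triangleCycle u p.1 p.2 (m + 1))) =
      Sym2.map Prod.fst ⁻¹' Set.range fun r => s(u r, u (r + 1)) := by
    ext f
    simp only [Set.mem_iUnion, Set.mem_range, Set.mem_preimage]
    constructor
    · rintro ⟨⟨r, i⟩, m, rfl⟩
      fin_cases m <;> exact hedge _ _ (by simp)
    · rintro ⟨r, hf⟩
      obtain ⟨i, j, rfl⟩ := Sym2.exists_eq_mk_of_map_fst_eq hf.symm
      obtain ⟨d, rfl⟩ : ∃ d, j = i + d := ⟨j - i, by simp⟩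
      fin_cases d
      · exact ⟨(r, i), 4, by simp [triangleCycle]⟩
      · exact ⟨(r, i), 0, by simp [triangleCycle]⟩
      · exact ⟨(r + 2, i + 4), 1, by simp [triangleCycle, hu.eq_iff]; omega⟩
      · exact ⟨(r + 1, i + 2), 2, by simp [triangleCycle, hu.eq_iff]; omega⟩
      · exact ⟨(r, i + 4), 3, by simp [triangleCycle, hu.eq_iff]; omega⟩
  rw [← hcover]
  refine cycleDecomposable_iUnion_range_of_injective (fun ⟨r, i⟩ m m' h => ?_)
    (fun ⟨r, i⟩ m => ?_) fun p q m m' h => Prod.ext_iff.2 (triangleCycle_unique hu h)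
  · fin_cases m <;> fin_cases m' <;> simp [triangleCycle, hu.eq_iff] at h ⊢
  · fin_cases m <;> exact adj_of_ne_of_adj_succ hadj (by simp)

def pentagonCycle (v : Fin 5 → V) (x y m : Fin 5) : V × Fin 5 :=
  (v m, x + m * y)

open Fin.CommRing in
theorem pentagonCycle_unique {v : Fin 5 → V} (hv : Injective v) {x y x' y' m m' : Fin 5}
    (h : s(pentagonCycle v x y m, pentagonCycle v x y (m + 1)) =
      s(pentagonCycle v x' y' m', pentagonCycle v x' y' (m' + 1))) :
    x = x' ∧ y = y' := by
  simp only [pentagonCycle, Sym2.eq_iff, Prod.mk.injEq, hv.eq_iff] at h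
  rcases h with ⟨⟨rfl, h₀⟩, -, h₁⟩ | ⟨⟨h₀, -⟩, h₁, -⟩
  · obtain rfl : y = y' := by linear_combination h₁ - h₀
    exact ⟨by linear_combination h₀, rfl⟩
  · -- the reversed orientation would give `m = m' + 1` and `m' = m + 1`, i.e. `2 = 0` in `ℤ/5`
    omega

open Fin.CommRing in
theorem cycleDecomposable_blowup_pentagon {v : Fin 5 → V} (hv : Injective v)
    (hadj : ∀ m, G.Adj (v m) (v (m + 1))) :
    (blowup G 5).CycleDecomposable {5}
      (Sym2.map Prod.fst ⁻¹' Set.range fun m => s(v m, v (m + 1))) := by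
  have hcover : ⋃ p : Fin 5 × Fin 5, Set.range (fun m =>
      s(pentagonCycle v p.1 p.2 m, pentagonCycle v p.1 p.2 (m + 1))) =
      Sym2.map Prod.fst ⁻¹' Set.range fun m => s(v m, v (m + 1)) := by
    ext f
    simp only [Set.mem_iUnion, Set.mem_range, Set.mem_preimage]
    constructor
    · rintro ⟨⟨x, y⟩, m, rfl⟩
      exact ⟨m, rfl⟩
    · rintro ⟨m, hf⟩
      obtain ⟨i, j, rfl⟩ := Sym2.exists_eq_mk_of_map_fst_eq hf.symm
      refine ⟨(i - m * (j - i), j - i), m, ?_⟩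
      simp only [pentagonCycle]
      congr 2 <;> ring
  rw [← hcover]
  exact cycleDecomposable_iUnion_range_of_injective (fun _ _ _ h => hv (congrArg Prod.fst h))
    (fun _ m => hadj m) fun _ _ _ _ h => Prod.ext_iff.2 (pentagonCycle_unique hv h)

end Blowup

end SimpleGraph

theorem stmt_8_general {V : Type*} (G : SimpleGraph V)
    (h : HasCycleDecomp G {3, 5}) :
    HasCycleDecomp (blowup G 5) {5} := by
  obtain ⟨D, hD, hunion, hdisj⟩ := hasCycleDecomp_iff.1 h
  rw [hasCycleDecomp_iff, blowup_edgeSet, ← hunion, Set.preimage_sUnion]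
  refine CycleDecomposable.biUnion (fun E hE E' hE' hne => (hdisj hE hE' hne).preimage _)
    fun E hE => ?_
  obtain ⟨u, w, hw, hlen | hlen, rfl⟩ := hD E hE
  · obtain ⟨c, -, hadj, hedges⟩ := hw.exists_enumeration (n := 3) hlen
    rw [hedges]
    exact cycleDecomposable_blowup_triangle hadj
  · obtain ⟨c, hc, hadj, hedges⟩ := hw.exists_enumeration (n := 5) hlen
    rw [hedges]
    exact cycleDecomposable_blowup_pentagon hc hadj

theorem stmt_8 {V : Type*} [Fintype V] (G : SimpleGraph V)
    (h : HasCycleDecomp G {3, 5}) :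
    HasCycleDecomp (blowup G 5) {5} :=
  stmt_8_general G h
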